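/- For a Gaussian-restricted Wasserstein ball, the worst-case mean-plus-standard-deviation risk admits the closed form: min over w in the simplex of max over Q in B_ε(P̂;L) of the risk equals min over w of (−μ̂^T w + α√(w^T Σ̂ w) + ε√(1+α²)·√(w^T (LL^T)^{-1} w)), where B_ε(P̂;L) is the set of Gaussians at parametrized Gelbrich distance at most ε from P̂ = N(μ̂, Σ̂). -/

import Mathlib

open scoped BigOperators Matrix

noncomputable section

/-- Euclidean norm of a vector in `ℝ^d`. -/
def enorm8 {d : ℕ} (v : Fin d → ℝ) : ℝ := Real.sqrt (∑ i, v i ^ 2)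

open scoped Classical in
/-- The positive semidefinite square root of a matrix (0 if not PSD). -/
def msqrt8 {d : ℕ} (A : Matrix (Fin d) (Fin d) ℝ) : Matrix (Fin d) (Fin d) ℝ :=
  if h : A.PosSemidef then
    (h.1.eigenvectorUnitary : Matrix (Fin d) (Fin d) ℝ) *
      Matrix.diagonal (Real.sqrt ∘ h.1.eigenvalues) *
      (star h.1.eigenvectorUnitary : Matrix (Fin d) (Fin d) ℝ) else 0

/-- The parametrized Gelbrich distance between mean-covariance pairs. -/
def gelbrich8 {d : ℕ} (μQ : Fin d → ℝ) (SQ : Matrix (Fin d) (Fin d) ℝ)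
    (μP : Fin d → ℝ) (SP : Matrix (Fin d) (Fin d) ℝ)
    (L : Matrix (Fin d) (Fin d) ℝ) : ℝ :=
  Real.sqrt (enorm8 (Lᵀ.mulVec (μQ - μP)) ^ 2 + ((SQ + SP) * (L * Lᵀ)).trace -
    2 * (msqrt8 (msqrt8 SP * (L * Lᵀ) * SQ * (L * Lᵀ) * msqrt8 SP)).trace)

namespace Matrix.PosSemidef

/-- The eigen-decomposition square root of a PSD real matrix (as `msqrt8`). -/
abbrev sqrt {d : ℕ} {A : Matrix (Fin d) (Fin d) ℝ} (h : A.PosSemidef) :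
    Matrix (Fin d) (Fin d) ℝ :=
  (h.1.eigenvectorUnitary : Matrix (Fin d) (Fin d) ℝ) *
      Matrix.diagonal (Real.sqrt ∘ h.1.eigenvalues) *
      (star h.1.eigenvectorUnitary : Matrix (Fin d) (Fin d) ℝ)

open scoped MatrixOrder in
lemma sqrt_eq_cfc {d : ℕ} {A : Matrix (Fin d) (Fin d) ℝ} (h : A.PosSemidef) :
    h.sqrt = CFC.sqrt A := by
  rw [CFC.sqrt_eq_real_sqrt A (Matrix.nonneg_iff_posSemidef.mpr h), cfcₙ_eq_cfc, h.1.cfc_eq,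
    Matrix.IsHermitian.cfc, Unitary.conjStarAlgAut_apply, RCLike.ofReal_real_eq_id]
  rfl

open scoped MatrixOrder in
lemma posSemidef_sqrt {d : ℕ} {A : Matrix (Fin d) (Fin d) ℝ} (h : A.PosSemidef) :
    h.sqrt.PosSemidef := by
  rw [sqrt_eq_cfc]; exact Matrix.nonneg_iff_posSemidef.mp (CFC.sqrt_nonneg A)

open scoped MatrixOrder in
lemma sqrt_mul_self {d : ℕ} {A : Matrix (Fin d) (Fin d) ℝ} (h : A.PosSemidef) :
    h.sqrt * h.sqrt = A := by
  rw [sqrt_eq_cfc]; exact CFC.sqrt_mul_sqrt_self A (Matrix.nonneg_iff_posSemidef.mpr h)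

open scoped MatrixOrder in
lemma eq_sqrt_of_sq_eq {d : ℕ} {B : Matrix (Fin d) (Fin d) ℝ} (hB : B.PosSemidef)
    {A : Matrix (Fin d) (Fin d) ℝ} (hA : A.PosSemidef) (h : B ^ 2 = A) : B = hA.sqrt := by
  rw [sqrt_eq_cfc]
  exact (CFC.sqrt_unique (by rw [← sq]; exact h) (Matrix.nonneg_iff_posSemidef.mpr hB)).symm

end Matrix.PosSemidef

namespace G8

variable {k : ℕ}

lemma star_eq_transpose (A : Matrix (Fin k) (Fin k) ℝ) : star A = Aᵀ := by
  ext i j; simp [Matrix.star_apply]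

lemma dot_self_nonneg (v : Fin k → ℝ) : 0 ≤ v ⬝ᵥ v :=
  Finset.sum_nonneg fun i _ => mul_self_nonneg _

lemma dot_self_eq_sum_sq (v : Fin k → ℝ) : v ⬝ᵥ v = ∑ i, v i ^ 2 := by
  simp [dotProduct, sq]

lemma trace_transpose_mul (A : Matrix (Fin k) (Fin k) ℝ) :
    (Aᵀ * A).trace = ∑ j, ∑ i, A i j ^ 2 := by
  simp [Matrix.trace, Matrix.diag, Matrix.mul_apply, sq]

lemma trace_transpose_mul_nonneg (A : Matrix (Fin k) (Fin k) ℝ) :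
    0 ≤ (Aᵀ * A).trace := by
  rw [trace_transpose_mul]
  exact Finset.sum_nonneg fun j _ => Finset.sum_nonneg fun i _ => sq_nonneg _

lemma mulVec_transpose_sq_le (A : Matrix (Fin k) (Fin k) ℝ) (v : Fin k → ℝ) :
    (Aᵀ *ᵥ v) ⬝ᵥ (Aᵀ *ᵥ v) ≤ (Aᵀ * A).trace * (v ⬝ᵥ v) := by
  rw [trace_transpose_mul, dot_self_eq_sum_sq, dot_self_eq_sum_sq, Finset.sum_mul]
  refine Finset.sum_le_sum fun j _ => ?_
  have h : (Aᵀ *ᵥ v) j = ∑ i, A i j * v i := by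
    simp [Matrix.mulVec, dotProduct, Matrix.transpose_apply]
  rw [h]
  calc (∑ i, A i j * v i) ^ 2 ≤ (∑ i, A i j ^ 2) * ∑ i, v i ^ 2 :=
        Finset.sum_mul_sq_le_sq_mul_sq _ _ _
    _ = (∑ i, A i j ^ 2) * ∑ i, v i ^ 2 := rfl

lemma dot_le_sqrt_mul_sqrt (x y : Fin k → ℝ) :
    x ⬝ᵥ y ≤ Real.sqrt (x ⬝ᵥ x) * Real.sqrt (y ⬝ᵥ y) := by
  have h := Finset.sum_mul_sq_le_sq_mul_sq Finset.univ x y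
  have hx := dot_self_nonneg x
  have hy := dot_self_nonneg y
  have h1 : (x ⬝ᵥ y) ^ 2 ≤ (x ⬝ᵥ x) * (y ⬝ᵥ y) := by
    rw [dot_self_eq_sum_sq, dot_self_eq_sum_sq]
    simpa [dotProduct] using h
  calc x ⬝ᵥ y ≤ Real.sqrt ((x ⬝ᵥ y) ^ 2) := by
        rw [Real.sqrt_sq_eq_abs]; exact le_abs_self _
    _ ≤ Real.sqrt ((x ⬝ᵥ x) * (y ⬝ᵥ y)) := Real.sqrt_le_sqrt h1
    _ = Real.sqrt (x ⬝ᵥ x) * Real.sqrt (y ⬝ᵥ y) := Real.sqrt_mul hx _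

lemma rev_triangle_sq (x y : Fin k → ℝ) :
    (Real.sqrt (x ⬝ᵥ x) - Real.sqrt (y ⬝ᵥ y)) ^ 2 ≤ (x - y) ⬝ᵥ (x - y) := by
  have h1 : (x - y) ⬝ᵥ (x - y) = x ⬝ᵥ x - 2 * (x ⬝ᵥ y) + y ⬝ᵥ y := by
    rw [sub_dotProduct, dotProduct_sub, dotProduct_sub,
      dotProduct_comm y x]
    ring
  rw [h1]
  nlinarith [dot_le_sqrt_mul_sqrt x y, Real.sq_sqrt (dot_self_nonneg x),
    Real.sq_sqrt (dot_self_nonneg y)]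

end G8

namespace G8

lemma exists_isometry {k : ℕ} (C : Matrix (Fin k) (Fin k) ℝ) (hK : (Cᵀ * C).PosSemidef) :
    ∃ U : Matrix (Fin k) (Fin k) ℝ,
      U * C = hK.sqrt ∧ (Uᵀ * U) * (Uᵀ * U) = Uᵀ * U := by
  classical
  set K := Cᵀ * C with hKdef
  have hH : K.IsHermitian := hK.1
  set V : Matrix (Fin k) (Fin k) ℝ := (hH.eigenvectorUnitary : Matrix (Fin k) (Fin k) ℝ) with hV
  set ev : Fin k → ℝ := hH.eigenvalues with hev
  have hV1 : V * star V = 1 := (Matrix.mem_unitaryGroup_iff).mp hH.eigenvectorUnitary.2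
  have hV1' : star V * V = 1 := (Matrix.mem_unitaryGroup_iff').mp hH.eigenvectorUnitary.2
  set Φ : (ℝ → ℝ) → Matrix (Fin k) (Fin k) ℝ :=
    fun g => V * Matrix.diagonal (g ∘ ev) * star V with hΦ
  have key : ∀ g h : ℝ → ℝ, Φ g * Φ h = Φ (fun x => g x * h x) := by
    intro g h
    simp only [hΦ]
    calc V * Matrix.diagonal (g ∘ ev) * star V * (V * Matrix.diagonal (h ∘ ev) * star V)
        = V * Matrix.diagonal (g ∘ ev) * (star V * V) * Matrix.diagonal (h ∘ ev) * star V := by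
          simp only [Matrix.mul_assoc]
      _ = V * (Matrix.diagonal (g ∘ ev) * Matrix.diagonal (h ∘ ev)) * star V := by
          rw [hV1']; simp only [Matrix.mul_one, Matrix.mul_assoc]
      _ = _ := by rw [Matrix.diagonal_mul_diagonal]; rfl
  have hspec : K = Φ id := by
    have := hH.spectral_theorem
    rw [Unitary.conjStarAlgAut_apply, RCLike.ofReal_real_eq_id] at this
    simpa [hΦ, Function.comp] using this
  have hsqrt : hK.sqrt = Φ Real.sqrt := by
    unfold Matrix.PosSemidef.sqrt
    rfl
  have hΦt : ∀ g : ℝ → ℝ, (Φ g)ᵀ = Φ g := by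
    intro g
    simp only [hΦ, star_eq_transpose, Matrix.transpose_mul, Matrix.transpose_transpose,
      Matrix.diagonal_transpose, Matrix.mul_assoc]
  set f : ℝ → ℝ := fun x => (Real.sqrt x)⁻¹ with hf
  refine ⟨Φ f * Cᵀ, ?_, ?_⟩
  · have : Φ f * Cᵀ * C = Φ f * Φ id := by rw [Matrix.mul_assoc, ← hKdef, hspec]
    rw [this, key, hsqrt]
    suffices hfe : ((fun x => f x * id x) ∘ ev) = (Real.sqrt ∘ ev) by
      simp only [hΦ, hfe]
    funext i
    have h0 : 0 ≤ ev i := hK.eigenvalues_nonneg i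
    show (Real.sqrt (ev i))⁻¹ * (ev i) = Real.sqrt (ev i)
    rcases eq_or_lt_of_le h0 with h | h
    · simp [← h]
    · have hs : 0 < Real.sqrt (ev i) := Real.sqrt_pos.mpr h
      have hm : ev i = Real.sqrt (ev i) * Real.sqrt (ev i) := (Real.mul_self_sqrt h0).symm
      set r := Real.sqrt (ev i) with hr
      rw [hm, ← mul_assoc, inv_mul_cancel₀ hs.ne', one_mul]
  · have ht : (Φ f * Cᵀ)ᵀ * (Φ f * Cᵀ) = C * (Φ f * Φ f) * Cᵀ := by
      rw [Matrix.transpose_mul, Matrix.transpose_transpose, hΦt]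
      simp only [Matrix.mul_assoc]
    rw [ht, key]
    have step : C * Φ (fun x => f x * f x) * Cᵀ * (C * Φ (fun x => f x * f x) * Cᵀ)
        = C * (Φ (fun x => f x * f x) * Φ id * Φ (fun x => f x * f x)) * Cᵀ := by
      rw [← hspec]
      simp only [Matrix.mul_assoc, hKdef]
    rw [step, key, key]
    suffices hfe : ((fun x => (fun x => f x * f x) x * id x * (f x * f x)) ∘ ev)
        = ((fun x => f x * f x) ∘ ev) by
      simp only [hΦ, hfe]
    funext i
    have h0 : 0 ≤ ev i := hK.eigenvalues_nonneg i
    show (Real.sqrt (ev i))⁻¹ * (Real.sqrt (ev i))⁻¹ * (ev i)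
        * ((Real.sqrt (ev i))⁻¹ * (Real.sqrt (ev i))⁻¹)
        = (Real.sqrt (ev i))⁻¹ * (Real.sqrt (ev i))⁻¹
    rcases eq_or_lt_of_le h0 with h | h
    · simp [← h]
    · have hs : 0 < Real.sqrt (ev i) := Real.sqrt_pos.mpr h
      have hm : ev i = Real.sqrt (ev i) * Real.sqrt (ev i) := (Real.mul_self_sqrt h0).symm
      set r := Real.sqrt (ev i) with hr
      rw [hm]
      field_simp

end G8

namespace G8

lemma dot_shift {k : ℕ} (A : Matrix (Fin k) (Fin k) ℝ) (x z : Fin k → ℝ) :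
    (A *ᵥ x) ⬝ᵥ z = x ⬝ᵥ (Aᵀ *ᵥ z) := by
  simp only [dotProduct, Matrix.mulVec, Matrix.transpose_apply, Finset.sum_mul,
    Finset.mul_sum]
  rw [Finset.sum_comm]
  exact Finset.sum_congr rfl fun i _ => Finset.sum_congr rfl fun j _ => by ring

lemma bures_proj {k : ℕ} (E D : Matrix (Fin k) (Fin k) ℝ)
    (hK : ((Eᵀ * D)ᵀ * (Eᵀ * D)).PosSemidef) (v : Fin k → ℝ) :
    0 ≤ (Eᵀ * E).trace + (Dᵀ * D).trace - 2 * hK.sqrt.trace ∧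
    (max (Real.sqrt ((Eᵀ *ᵥ v) ⬝ᵥ (Eᵀ *ᵥ v)) - Real.sqrt ((Dᵀ *ᵥ v) ⬝ᵥ (Dᵀ *ᵥ v))) 0) ^ 2
      ≤ ((Eᵀ * E).trace + (Dᵀ * D).trace - 2 * hK.sqrt.trace) * (v ⬝ᵥ v) := by
  classical
  obtain ⟨U, hUC, hQ⟩ := exists_isometry (Eᵀ * D) hK
  set Q : Matrix (Fin k) (Fin k) ℝ := Uᵀ * U with hQdef
  have hQt : Qᵀ = Q := by
    rw [hQdef, Matrix.transpose_mul, Matrix.transpose_transpose]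
  -- trace identities
  have trEQ : ∀ A B : Matrix (Fin k) (Fin k) ℝ, (A * B).trace = (B * A).trace :=
    fun A B => Matrix.trace_mul_comm A B
  set trE := (Eᵀ * E).trace
  set trD := (Dᵀ * D).trace
  set trS := hK.sqrt.trace
  set trQ := (Eᵀ * E * Q).trace with htrQ
  have hN1 : ((E - E * Q)ᵀ * (E - E * Q)).trace = trE - trQ := by
    have expand : (E - E * Q)ᵀ * (E - E * Q)
        = Eᵀ * E - Eᵀ * E * Q - Q * (Eᵀ * E) + Q * (Eᵀ * E) * Q := by
      rw [Matrix.transpose_sub, Matrix.transpose_mul, hQt]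
      noncomm_ring
    rw [expand]
    have h1 : (Q * (Eᵀ * E)).trace = trQ := by rw [trEQ, htrQ]
    have h2 : (Q * (Eᵀ * E) * Q).trace = trQ := by
      rw [Matrix.trace_mul_comm, ← Matrix.mul_assoc, ← Matrix.mul_assoc]
      have : Q * Q * Eᵀ * E = Q * (Eᵀ * E) := by rw [hQ]; noncomm_ring
      rw [this, trEQ, htrQ]
    rw [Matrix.trace_add, Matrix.trace_sub, Matrix.trace_sub, h1, h2]
    ring
  have hN2 : ((E * Uᵀ - D)ᵀ * (E * Uᵀ - D)).trace = trQ + trD - 2 * trS := by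
    have expand : (E * Uᵀ - D)ᵀ * (E * Uᵀ - D)
        = U * (Eᵀ * E) * Uᵀ - U * (Eᵀ * D) - (U * (Eᵀ * D))ᵀ + Dᵀ * D := by
      simp only [Matrix.transpose_sub, Matrix.transpose_mul, Matrix.transpose_transpose]
      noncomm_ring
    rw [expand]
    have h1 : (U * (Eᵀ * E) * Uᵀ).trace = trQ := by
      rw [htrQ, hQdef, Matrix.trace_mul_cycle, Matrix.trace_mul_comm]
    have h2 : (U * (Eᵀ * D)).trace = trS := by rw [hUC]
    have h3 : ((U * (Eᵀ * D))ᵀ).trace = trS := by rw [Matrix.trace_transpose, hUC]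
    rw [Matrix.trace_add, Matrix.trace_sub, Matrix.trace_sub, h1, h2, h3]
    ring
  have hbur : trE + trD - 2 * trS
      = ((E - E * Q)ᵀ * (E - E * Q)).trace + ((E * Uᵀ - D)ᵀ * (E * Uᵀ - D)).trace := by
    rw [hN1, hN2]; ring
  have hburpos : 0 ≤ trE + trD - 2 * trS := by
    rw [hbur]
    exact add_nonneg (trace_transpose_mul_nonneg _) (trace_transpose_mul_nonneg _)
  refine ⟨hburpos, ?_⟩
  set x := Eᵀ *ᵥ v with hx
  set y := Dᵀ *ᵥ v with hy
  set a := Real.sqrt (x ⬝ᵥ x) with ha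
  set b := Real.sqrt (y ⬝ᵥ y) with hb
  rcases le_or_gt a b with hab | hab
  · have : max (a - b) 0 = 0 := max_eq_right (by linarith)
    rw [this]
    simpa using mul_nonneg hburpos (dot_self_nonneg v)
  · have hmax : max (a - b) 0 = a - b := max_eq_left (by linarith)
    rw [hmax]
    -- vectors
    have hxQ : (E - E * Q)ᵀ *ᵥ v = x - Q *ᵥ x := by
      rw [Matrix.transpose_sub, Matrix.transpose_mul, hQt, Matrix.sub_mulVec, ← hx,
        ← Matrix.mulVec_mulVec]
    have hrv : (E * Uᵀ - D)ᵀ *ᵥ v = U *ᵥ x - y := by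
      rw [Matrix.transpose_sub, Matrix.transpose_mul, Matrix.transpose_transpose,
        Matrix.sub_mulVec, ← hy, ← Matrix.mulVec_mulVec]
    -- quadratic identities
    have hUx : (U *ᵥ x) ⬝ᵥ (U *ᵥ x) = x ⬝ᵥ (Q *ᵥ x) := by
      rw [dot_shift, Matrix.mulVec_mulVec, hQdef]
    have hQx : (Q *ᵥ x) ⬝ᵥ (Q *ᵥ x) = x ⬝ᵥ (Q *ᵥ x) := by
      rw [dot_shift, Matrix.mulVec_mulVec, hQt, hQ]
    -- bounds
    have b1 : ((x - Q *ᵥ x) ⬝ᵥ (x - Q *ᵥ x)) ≤ ((E - E * Q)ᵀ * (E - E * Q)).trace * (v ⬝ᵥ v) := by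
      rw [← hxQ]; exact mulVec_transpose_sq_le _ v
    have b2 : ((U *ᵥ x - y) ⬝ᵥ (U *ᵥ x - y)) ≤ ((E * Uᵀ - D)ᵀ * (E * Uᵀ - D)).trace * (v ⬝ᵥ v) := by
      rw [← hrv]; exact mulVec_transpose_sq_le _ v
    have b3 : (Real.sqrt ((U *ᵥ x) ⬝ᵥ (U *ᵥ x)) - b) ^ 2 ≤ (U *ᵥ x - y) ⬝ᵥ (U *ᵥ x - y) :=
      rev_triangle_sq _ _
    -- pythagoras
    have pyth : (x - Q *ᵥ x) ⬝ᵥ (x - Q *ᵥ x) = x ⬝ᵥ x - x ⬝ᵥ (Q *ᵥ x) := by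
      rw [sub_dotProduct, dotProduct_sub, dotProduct_sub, hQx,
        dotProduct_comm (Q *ᵥ x) x]
      ring
    set p := Real.sqrt (x ⬝ᵥ (Q *ᵥ x)) with hp
    have hpUx : Real.sqrt ((U *ᵥ x) ⬝ᵥ (U *ᵥ x)) = p := by rw [hUx]
    rw [hpUx] at b3
    have hq2 : 0 ≤ x ⬝ᵥ x - x ⬝ᵥ (Q *ᵥ x) := by rw [← pyth]; exact dot_self_nonneg _
    have hp2 : p ^ 2 = x ⬝ᵥ (Q *ᵥ x) := Real.sq_sqrt (by rw [← hQx]; exact dot_self_nonneg _)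
    have ha2 : a ^ 2 = x ⬝ᵥ x := Real.sq_sqrt (dot_self_nonneg x)
    have hple : p ≤ a := by
      have := Real.sqrt_le_sqrt (show x ⬝ᵥ (Q *ᵥ x) ≤ x ⬝ᵥ x by linarith)
      rwa [← ha, ← hp] at this
    have hbnn : 0 ≤ b := Real.sqrt_nonneg _
    have hpnn : 0 ≤ p := Real.sqrt_nonneg _
    -- combine
    have key : (a - b) ^ 2 ≤ (x ⬝ᵥ x - x ⬝ᵥ (Q *ᵥ x)) + (p - b) ^ 2 := by
      nlinarith [hple, hbnn]
    calc (a - b) ^ 2 ≤ (x ⬝ᵥ x - x ⬝ᵥ (Q *ᵥ x)) + (p - b) ^ 2 := key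
      _ ≤ ((E - E * Q)ᵀ * (E - E * Q)).trace * (v ⬝ᵥ v)
          + ((E * Uᵀ - D)ᵀ * (E * Uᵀ - D)).trace * (v ⬝ᵥ v) := by
          rw [← pyth]
          exact add_le_add b1 (le_trans b3 b2)
      _ = (trE + trD - 2 * trS) * (v ⬝ᵥ v) := by rw [hbur]; ring

end G8

namespace G8

variable {k : ℕ}

lemma conjT_eq (A : Matrix (Fin k) (Fin k) ℝ) : Aᴴ = Aᵀ := by
  ext i j; simp [Matrix.conjTranspose_apply]

lemma herm_transpose {A : Matrix (Fin k) (Fin k) ℝ} (h : A.IsHermitian) : Aᵀ = A := by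
  rw [← conjT_eq]; exact h

lemma posSemidef_transpose_mul_self (C : Matrix (Fin k) (Fin k) ℝ) :
    (Cᵀ * C).PosSemidef := by
  have := Matrix.posSemidef_conjTranspose_mul_self C
  rwa [conjT_eq] at this

lemma dot_self_pos {v : Fin k → ℝ} (hv : v ≠ 0) : 0 < v ⬝ᵥ v := by
  rcases (Function.ne_iff.mp hv) with ⟨i, hi⟩
  rw [dot_self_eq_sum_sq]
  exact Finset.sum_pos' (fun j _ => sq_nonneg _)
    ⟨i, Finset.mem_univ i, lt_of_le_of_ne (sq_nonneg _) (Ne.symm (pow_ne_zero 2 hi))⟩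

lemma mul_vecMulVec (A : Matrix (Fin k) (Fin k) ℝ) (x y : Fin k → ℝ) :
    A * Matrix.vecMulVec x y = Matrix.vecMulVec (A *ᵥ x) y := by
  ext i j
  simp [Matrix.mul_apply, Matrix.vecMulVec_apply, Matrix.mulVec, dotProduct,
    Finset.sum_mul]
  exact Finset.sum_congr rfl fun l _ => by ring

lemma vecMulVec_mul (x y : Fin k → ℝ) (A : Matrix (Fin k) (Fin k) ℝ) :
    Matrix.vecMulVec x y * A = Matrix.vecMulVec x (Aᵀ *ᵥ y) := by
  ext i j
  simp [Matrix.mul_apply, Matrix.vecMulVec_apply, Matrix.mulVec, dotProduct,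
    Finset.mul_sum]
  exact Finset.sum_congr rfl fun l _ => by ring

lemma vecMulVec_mul_vecMulVec (a b c d : Fin k → ℝ) :
    Matrix.vecMulVec a b * Matrix.vecMulVec c d = (b ⬝ᵥ c) • Matrix.vecMulVec a d := by
  ext i j
  simp [Matrix.mul_apply, Matrix.vecMulVec_apply, dotProduct, Finset.sum_mul,
    Finset.mul_sum]
  exact Finset.sum_congr rfl fun l _ => by ring

lemma trace_mul_vecMulVec (A : Matrix (Fin k) (Fin k) ℝ) (x y : Fin k → ℝ) :
    (A * Matrix.vecMulVec x y).trace = y ⬝ᵥ (A *ᵥ x) := by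
  simp [Matrix.trace, Matrix.diag, Matrix.mul_apply, Matrix.vecMulVec_apply,
    dotProduct, Matrix.mulVec, Finset.mul_sum]
  exact Finset.sum_congr rfl fun i _ => Finset.sum_congr rfl fun j _ => by ring

lemma vecMulVec_transpose (x y : Fin k → ℝ) :
    (Matrix.vecMulVec x y)ᵀ = Matrix.vecMulVec y x := by
  ext i j; simp [Matrix.vecMulVec_apply, mul_comm]

lemma vecMulVec_mulVec (x y z : Fin k → ℝ) :
    Matrix.vecMulVec x y *ᵥ z = (y ⬝ᵥ z) • x := by
  ext i
  simp [Matrix.vecMulVec_apply, Matrix.mulVec, dotProduct, Finset.mul_sum]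
  rw [Finset.sum_mul]
  exact Finset.sum_congr rfl fun l _ => by ring

lemma vecMulVec_posSemidef (x : Fin k → ℝ) : (Matrix.vecMulVec x x).PosSemidef := by
  refine Matrix.PosSemidef.of_dotProduct_mulVec_nonneg ?_ ?_
  · show (Matrix.vecMulVec x x)ᴴ = _
    rw [conjT_eq, vecMulVec_transpose]
  · intro z
    rw [vecMulVec_mulVec]
    simp only [star_trivial, dotProduct_smul, smul_eq_mul]
    rw [dotProduct_comm]
    exact mul_self_nonneg _

end G8

open Matrix in
theorem gelbrich8_def' {d : ℕ} (μQ : Fin d → ℝ) (SQ : Matrix (Fin d) (Fin d) ℝ)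
    (μP : Fin d → ℝ) (SP : Matrix (Fin d) (Fin d) ℝ) (L : Matrix (Fin d) (Fin d) ℝ) :
    gelbrich8 μQ SQ μP SP L =
    Real.sqrt (enorm8 (Lᵀ.mulVec (μQ - μP)) ^ 2 + ((SQ + SP) * (L * Lᵀ)).trace -
      2 * (msqrt8 (msqrt8 SP * (L * Lᵀ) * SQ * (L * Lᵀ) * msqrt8 SP)).trace) := rfl

namespace G8

variable {k : ℕ}

lemma L_det_isUnit {L : Matrix (Fin k) (Fin k) ℝ}
    (hLtri : ∀ i j : Fin k, i < j → L i j = 0)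
    (hLdiag : ∀ i : Fin k, 0 < L i i) : IsUnit L.det := by
  have hbt : L.BlockTriangular OrderDual.toDual := fun i j h => hLtri i j h
  rw [Matrix.det_of_lowerTriangular L hbt]
  exact isUnit_iff_ne_zero.mpr (Finset.prod_pos (fun i _ => hLdiag i)).ne'

lemma M_posDef {L : Matrix (Fin k) (Fin k) ℝ}
    (hLtri : ∀ i j : Fin k, i < j → L i j = 0)
    (hLdiag : ∀ i : Fin k, 0 < L i i) : (L * Lᵀ).PosDef := by
  have hdet := L_det_isUnit hLtri hLdiag
  refine Matrix.PosDef.of_dotProduct_mulVec_pos ?_ ?_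
  · show (L * Lᵀ)ᴴ = _
    rw [conjT_eq, Matrix.transpose_mul, Matrix.transpose_transpose]
  · intro x hx
    simp only [star_trivial]
    have h1 : (Lᵀ *ᵥ x) ⬝ᵥ (Lᵀ *ᵥ x) = x ⬝ᵥ (L * Lᵀ) *ᵥ x := by
      rw [dot_shift, Matrix.transpose_transpose, Matrix.mulVec_mulVec]
    rw [← h1]
    apply dot_self_pos
    intro h0
    apply hx
    have hdt : IsUnit Lᵀ.det := by rwa [Matrix.det_transpose]
    have : (Lᵀ)⁻¹ *ᵥ (Lᵀ *ᵥ x) = x := by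
      rw [Matrix.mulVec_mulVec, Matrix.nonsing_inv_mul _ hdt, Matrix.one_mulVec]
    rw [← this, h0, Matrix.mulVec_zero]

lemma sqrt_le_implies_sq {t e : ℝ} (ht : 0 ≤ t) (h : Real.sqrt t ≤ e) : t ≤ e ^ 2 := by
  nlinarith [Real.sq_sqrt ht, Real.sqrt_nonneg t]

lemma scalar_key {xn c2 c y bur α ε r : ℝ} (hxn0 : 0 ≤ xn) (hc20 : 0 ≤ c2)
    (hc0 : 0 ≤ c) (hcc : c ^ 2 = c2) (hy0 : 0 ≤ y) (hy2 : y ^ 2 ≤ bur * c2)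
    (hbur0 : 0 ≤ bur) (hg2 : xn ^ 2 + bur ≤ ε ^ 2) (hα : 0 < α) (hε : 0 < ε)
    (hr0 : 0 ≤ r) (hr2 : r ^ 2 = 1 + α ^ 2) :
    xn * c + α * y ≤ ε * r * c := by
  have e1 : (xn * c + α * y) ^ 2 ≤ (1 + α ^ 2) * (xn ^ 2 * c ^ 2 + y ^ 2) := by
    nlinarith [sq_nonneg (y - α * (xn * c))]
  have e2 : xn ^ 2 * c ^ 2 + y ^ 2 ≤ c2 * ε ^ 2 := by
    rw [hcc]
    nlinarith [hy2, hg2, hc20, sq_nonneg xn, hbur0]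
  have e3 : (xn * c + α * y) ^ 2 ≤ (ε * r * c) ^ 2 := by
    have h4 : (ε * r * c) ^ 2 = (1 + α ^ 2) * (c2 * ε ^ 2) := by
      rw [mul_pow, mul_pow, hr2, hcc]; ring
    rw [h4]
    calc (xn * c + α * y) ^ 2 ≤ (1 + α ^ 2) * (xn ^ 2 * c ^ 2 + y ^ 2) := e1
      _ ≤ (1 + α ^ 2) * (c2 * ε ^ 2) := by nlinarith [sq_nonneg α]
  have hl : 0 ≤ xn * c + α * y := add_nonneg (mul_nonneg hxn0 hc0) (mul_nonneg hα.le hy0)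
  have hrr : 0 ≤ ε * r * c := mul_nonneg (mul_nonneg hε.le hr0) hc0
  nlinarith [e3, hl, hrr]

lemma upper (μhat : Fin k → ℝ) (Shat L : Matrix (Fin k) (Fin k) ℝ) (α ε : ℝ)
    (hShat : Shat.PosDef) (hα : 0 < α) (hε : 0 < ε)
    (hLtri : ∀ i j : Fin k, i < j → L i j = 0) (hLdiag : ∀ i : Fin k, 0 < L i i)
    (w : Fin k → ℝ)
    (μ : Fin k → ℝ) (Sg : Matrix (Fin k) (Fin k) ℝ) (hps : Sg.PosSemidef)
    (hg : gelbrich8 μ Sg μhat Shat L ≤ ε) :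
    -(μ ⬝ᵥ w) + α * Real.sqrt (w ⬝ᵥ Sg *ᵥ w)
      ≤ -(μhat ⬝ᵥ w) + α * Real.sqrt (w ⬝ᵥ Shat *ᵥ w)
        + ε * Real.sqrt (1 + α ^ 2) * Real.sqrt (w ⬝ᵥ (L * Lᵀ)⁻¹ *ᵥ w) := by
  classical
  have hLdet := L_det_isUnit hLtri hLdiag
  set M := L * Lᵀ with hM
  set Shf := hShat.posSemidef.sqrt with hShfdef
  have hShfps := hShat.posSemidef.posSemidef_sqrt
  have hShft : Shfᵀ = Shf := herm_transpose hShfps.1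
  have hShfm : Shf * Shf = Shat := hShat.posSemidef.sqrt_mul_self
  set Sq := hps.sqrt with hSqdef
  have hSqps := hps.posSemidef_sqrt
  have hSqt : Sqᵀ = Sq := herm_transpose hSqps.1
  have hSqm : Sq * Sq = Sg := hps.sqrt_mul_self
  have hmsqS : msqrt8 Shat = Shf := by
    rw [msqrt8, dif_pos hShat.posSemidef]
  set E := Lᵀ * Sq with hE
  set D := Lᵀ * Shf with hD
  have hEt : Eᵀ = Sq * L := by
    rw [hE, Matrix.transpose_mul, Matrix.transpose_transpose, hSqt]
  have hDt : Dᵀ = Shf * L := by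
    rw [hD, Matrix.transpose_mul, Matrix.transpose_transpose, hShft]
  have harg : msqrt8 Shat * (L * Lᵀ) * Sg * (L * Lᵀ) * msqrt8 Shat
      = (Eᵀ * D)ᵀ * (Eᵀ * D) := by
    rw [hmsqS, Matrix.transpose_mul, Matrix.transpose_transpose, hEt, hDt, hE, hD]
    simp only [Matrix.mul_assoc]
    rw [show Sq * (Sq * (L * (Lᵀ * Shf))) = Sg * (L * (Lᵀ * Shf)) by
      rw [← Matrix.mul_assoc, hSqm]]
  have hKps : ((Eᵀ * D)ᵀ * (Eᵀ * D)).PosSemidef := posSemidef_transpose_mul_self _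
  have trE_eq : (Eᵀ * E).trace = (Sg * M).trace := by
    rw [hEt, hE]
    have h1 : Sq * L * (Lᵀ * Sq) = Sq * (L * (Lᵀ * Sq)) := by
      simp only [Matrix.mul_assoc]
    rw [h1, Matrix.trace_mul_comm]
    have h2 : L * (Lᵀ * Sq) * Sq = M * Sg := by
      simp only [Matrix.mul_assoc]
      rw [show Sq * Sq = Sg from hSqm, hM, Matrix.mul_assoc]
    rw [h2, Matrix.trace_mul_comm]
  have trD_eq : (Dᵀ * D).trace = (Shat * M).trace := by
    rw [hDt, hD]
    have h1 : Shf * L * (Lᵀ * Shf) = Shf * (L * (Lᵀ * Shf)) := by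
      simp only [Matrix.mul_assoc]
    rw [h1, Matrix.trace_mul_comm]
    have h2 : L * (Lᵀ * Shf) * Shf = M * Shat := by
      simp only [Matrix.mul_assoc]
      rw [show Shf * Shf = Shat from hShfm, hM, Matrix.mul_assoc]
    rw [h2, Matrix.trace_mul_comm]
  have htr : ((Sg + Shat) * M).trace = (Eᵀ * E).trace + (Dᵀ * D).trace := by
    rw [Matrix.add_mul, Matrix.trace_add, trE_eq, trD_eq]
  -- rewrite the Gelbrich distance
  set xn := enorm8 (Lᵀ *ᵥ (μ - μhat)) with hxn
  set bur := (Eᵀ * E).trace + (Dᵀ * D).trace - 2 * hKps.sqrt.trace with hburdef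
  have hmsqK : (msqrt8 ((Eᵀ * D)ᵀ * (Eᵀ * D))).trace = hKps.sqrt.trace := by
    rw [msqrt8, dif_pos hKps]
  have hg' : Real.sqrt (xn ^ 2 + bur) ≤ ε := by
    rw [gelbrich8_def', harg, htr] at hg
    rw [hmsqK] at hg
    have hin : xn ^ 2 + bur
        = xn ^ 2 + ((Eᵀ * E).trace + (Dᵀ * D).trace) - 2 * hKps.sqrt.trace := by
      rw [hburdef]; ring
    rw [hin]
    exact hg
  -- projection machinery
  set v := L⁻¹ *ᵥ w with hv
  have hLv : L *ᵥ v = w := by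
    rw [hv, Matrix.mulVec_mulVec, Matrix.mul_nonsing_inv _ hLdet, Matrix.one_mulVec]
  obtain ⟨hbur0, hproj⟩ := bures_proj E D hKps v
  rw [← hburdef] at hbur0 hproj
  have hEv : Eᵀ *ᵥ v = Sq *ᵥ w := by
    rw [hEt, ← Matrix.mulVec_mulVec, hLv]
  have hDv : Dᵀ *ᵥ v = Shf *ᵥ w := by
    rw [hDt, ← Matrix.mulVec_mulVec, hLv]
  have haq : (Eᵀ *ᵥ v) ⬝ᵥ (Eᵀ *ᵥ v) = w ⬝ᵥ Sg *ᵥ w := by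
    rw [hEv, dot_shift, Matrix.mulVec_mulVec, hSqt, hSqm]
  have hbq : (Dᵀ *ᵥ v) ⬝ᵥ (Dᵀ *ᵥ v) = w ⬝ᵥ Shat *ᵥ w := by
    rw [hDv, dot_shift, Matrix.mulVec_mulVec, hShft, hShfm]
  have hvv : v ⬝ᵥ v = w ⬝ᵥ M⁻¹ *ᵥ w := by
    have h1 := dot_shift L⁻¹ w v
    rw [← hv] at h1
    rw [h1, hv, Matrix.mulVec_mulVec, hM, Matrix.mul_inv_rev, ← Matrix.transpose_nonsing_inv]
  rw [haq, hbq, hvv] at hproj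
  -- mean bound
  have hmean : μhat ⬝ᵥ w - μ ⬝ᵥ w ≤ xn * Real.sqrt (w ⬝ᵥ M⁻¹ *ᵥ w) := by
    have h2 : (Lᵀ *ᵥ (μ - μhat)) ⬝ᵥ v = (μ - μhat) ⬝ᵥ w := by
      rw [dot_shift, Matrix.transpose_transpose, hLv]
    have h3 := dot_le_sqrt_mul_sqrt (-(Lᵀ *ᵥ (μ - μhat))) v
    rw [neg_dotProduct, h2, sub_dotProduct] at h3
    have h4 : Real.sqrt ((-(Lᵀ *ᵥ (μ - μhat))) ⬝ᵥ (-(Lᵀ *ᵥ (μ - μhat)))) = xn := by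
      rw [neg_dotProduct, dotProduct_neg, neg_neg, hxn, enorm8,
        dot_self_eq_sum_sq]
    rw [h4, hvv] at h3
    linarith
  -- final scalar assembly
  set s := w ⬝ᵥ Sg *ᵥ w
  set sh := w ⬝ᵥ Shat *ᵥ w
  set c2 := w ⬝ᵥ M⁻¹ *ᵥ w with hc2def
  have hc20 : 0 ≤ c2 := by rw [← hvv]; exact dot_self_nonneg v
  set c := Real.sqrt c2 with hc
  have hc0 : 0 ≤ c := Real.sqrt_nonneg _
  have hcc : c ^ 2 = c2 := Real.sq_sqrt hc20
  set y := max (Real.sqrt s - Real.sqrt sh) 0 with hy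
  have hy0 : 0 ≤ y := le_max_right _ _
  have hsy : Real.sqrt s ≤ Real.sqrt sh + y := by
    have := le_max_left (Real.sqrt s - Real.sqrt sh) 0
    linarith
  have hy2 : y ^ 2 ≤ bur * c2 := hproj
  have hxn0 : 0 ≤ xn := Real.sqrt_nonneg _
  have hsum : 0 ≤ xn ^ 2 + bur := add_nonneg (sq_nonneg xn) hbur0
  have hg2 : xn ^ 2 + bur ≤ ε ^ 2 := sqrt_le_implies_sq hsum hg'
  set r := Real.sqrt (1 + α ^ 2) with hr
  have hr0 : 0 ≤ r := Real.sqrt_nonneg _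
  have hr2 : r ^ 2 = 1 + α ^ 2 := Real.sq_sqrt (by positivity)
  have key : xn * c + α * y ≤ ε * r * c :=
    scalar_key hxn0 hc20 hc0 hcc hy0 hy2 hbur0 hg2 hα hε hr0 hr2
  have hαs : α * Real.sqrt s ≤ α * (Real.sqrt sh + y) :=
    mul_le_mul_of_nonneg_left hsy hα.le
  linarith [hmean, key, hαs]

end G8

namespace G8

lemma posSemidef_smul {k : ℕ} {A : Matrix (Fin k) (Fin k) ℝ} (hA : A.PosSemidef)
    {τ : ℝ} (hτ : 0 ≤ τ) : (τ • A).PosSemidef := by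
  refine Matrix.PosSemidef.of_dotProduct_mulVec_nonneg ?_ ?_
  · show (τ • A)ᴴ = _
    rw [conjT_eq, Matrix.transpose_smul, herm_transpose hA.1]
  · intro x
    rw [Matrix.smul_mulVec, dotProduct_smul]
    exact mul_nonneg hτ (by simpa using hA.dotProduct_mulVec_nonneg x)

lemma attain {k : ℕ} (μhat : Fin k → ℝ) (Shat L : Matrix (Fin k) (Fin k) ℝ) (α ε : ℝ)
    (hShat : Shat.PosDef) (hα : 0 < α) (hε : 0 < ε)
    (hLtri : ∀ i j : Fin k, i < j → L i j = 0) (hLdiag : ∀ i : Fin k, 0 < L i i)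
    (w : Fin k → ℝ) (hw0 : w ≠ 0) :
    ∃ q : (Fin k → ℝ) × Matrix (Fin k) (Fin k) ℝ,
      q.2.PosSemidef ∧ gelbrich8 q.1 q.2 μhat Shat L ≤ ε ∧
      -(q.1 ⬝ᵥ w) + α * Real.sqrt (w ⬝ᵥ q.2 *ᵥ w)
        = -(μhat ⬝ᵥ w) + α * Real.sqrt (w ⬝ᵥ Shat *ᵥ w)
          + ε * Real.sqrt (1 + α ^ 2) * Real.sqrt (w ⬝ᵥ (L * Lᵀ)⁻¹ *ᵥ w) := by
  classical
  have hM_pd := M_posDef hLtri hLdiag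
  set M := L * Lᵀ with hMdef
  have hMdetu : IsUnit M.det := (Matrix.isUnit_iff_isUnit_det M).mp hM_pd.isUnit
  have hMinv_pd : M⁻¹.PosDef := hM_pd.inv
  have hMinvT : M⁻¹ᵀ = M⁻¹ := herm_transpose hMinv_pd.1
  have hMMinv : M * M⁻¹ = 1 := Matrix.mul_nonsing_inv _ hMdetu
  have hMinvM : M⁻¹ * M = 1 := Matrix.nonsing_inv_mul _ hMdetu
  set c2 := w ⬝ᵥ M⁻¹ *ᵥ w with hc2def
  have hc2 : 0 < c2 := by
    have := hMinv_pd.dotProduct_mulVec_pos hw0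
    simpa using this
  set c := Real.sqrt c2 with hcdef
  have hc0 : 0 < c := Real.sqrt_pos.mpr hc2
  have hcc : c ^ 2 = c2 := Real.sq_sqrt hc2.le
  set sh := w ⬝ᵥ Shat *ᵥ w with hshdef
  have hsh : 0 < sh := by
    have := hShat.dotProduct_mulVec_pos hw0
    simpa using this
  have hsqsh : 0 < Real.sqrt sh := Real.sqrt_pos.mpr hsh
  set r := Real.sqrt (1 + α ^ 2) with hrdef
  have hr0 : 0 < r := Real.sqrt_pos.mpr (by positivity)
  have hr2 : r ^ 2 = 1 + α ^ 2 := Real.sq_sqrt (by positivity)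
  set em := ε / r with hemdef
  set es := ε * α / r with hesdef
  have hem0 : 0 < em := div_pos hε hr0
  have hes0 : 0 < es := div_pos (mul_pos hε hα) hr0
  set t := es * c / Real.sqrt sh with htdef
  have ht0 : 0 < t := div_pos (mul_pos hes0 hc0) hsqsh
  set τ := t / c2 with hτdef
  have hτ0 : 0 < τ := div_pos ht0 hc2
  have hτc2 : τ * c2 = t := by rw [hτdef]; field_simp
  set W := Matrix.vecMulVec w w with hWdef
  set G := (1 : Matrix (Fin k) (Fin k) ℝ) + τ • (M⁻¹ * W) with hGdef
  set H := M + τ • W with hHdef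
  set Sstar := G * Shat * Gᵀ with hSstardef
  set μstar := μhat - (em / c) • (M⁻¹ *ᵥ w) with hμstardef
  have hWt : Wᵀ = W := by rw [hWdef, vecMulVec_transpose]
  have hGt : Gᵀ = 1 + τ • (W * M⁻¹) := by
    rw [hGdef, Matrix.transpose_add, Matrix.transpose_one, Matrix.transpose_smul,
      Matrix.transpose_mul, hWt, hMinvT]
  have hMG : M * G = H := by
    rw [hGdef, Matrix.mul_add, Matrix.mul_one, Matrix.mul_smul, ← Matrix.mul_assoc,
      hMMinv, Matrix.one_mul, hHdef]
  have hGtM : Gᵀ * M = H := by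
    rw [hGt, Matrix.add_mul, Matrix.one_mul, Matrix.smul_mul, Matrix.mul_assoc,
      hMinvM, Matrix.mul_one, hHdef]
  have hWMW : W * (M⁻¹ * W) = c2 • W := by
    rw [hWdef, mul_vecMulVec, vecMulVec_mul_vecMulVec, ← hc2def]
  have e1 : M * (τ • (M⁻¹ * W)) = τ • W := by
    rw [Matrix.mul_smul, ← Matrix.mul_assoc, hMMinv, Matrix.one_mul]
  have e2 : (τ • W) * (τ • (M⁻¹ * W)) = (τ * τ * c2) • W := by
    rw [Matrix.smul_mul, Matrix.mul_smul, hWMW, smul_smul, smul_smul]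
  have hHG : H * G = M + (2 * τ + τ ^ 2 * c2) • W := by
    calc H * G = M * 1 + M * (τ • (M⁻¹ * W)) + ((τ • W) * 1 + (τ • W) * (τ • (M⁻¹ * W))) := by
          rw [hHdef, hGdef, Matrix.add_mul, Matrix.mul_add, Matrix.mul_add]
      _ = M + τ • W + (τ • W + (τ * τ * c2) • W) := by
          rw [Matrix.mul_one, Matrix.mul_one, e1, e2]
      _ = M + (2 * τ + τ ^ 2 * c2) • W := by
          rw [add_smul, two_mul, add_smul, sq, mul_assoc]
          abel
  -- square-root facts for Shat
  set Shf := hShat.posSemidef.sqrt with hShfdef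
  have hShfps := hShat.posSemidef.posSemidef_sqrt
  have hShft : Shfᵀ = Shf := herm_transpose hShfps.1
  have hShfm : Shf * Shf = Shat := hShat.posSemidef.sqrt_mul_self
  have hmsqS : msqrt8 Shat = Shf := by rw [msqrt8, dif_pos hShat.posSemidef]
  -- positive semidefiniteness
  have hτW_ps : (τ • W).PosSemidef := posSemidef_smul (vecMulVec_posSemidef w) hτ0.le
  have hH_ps : H.PosSemidef := by
    rw [hHdef]; exact hM_pd.posSemidef.add hτW_ps
  have hSstar_ps : Sstar.PosSemidef := by
    have h := hShat.posSemidef.mul_mul_conjTranspose_same G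
    rwa [conjT_eq, ← hSstardef] at h
  set Bq := Shf * H * Shf with hBqdef
  have hBq_ps : Bq.PosSemidef := by
    have h := hH_ps.mul_mul_conjTranspose_same Shf
    rwa [conjT_eq, hShft, ← hBqdef] at h
  -- the matrix inside the sqrt in the Gelbrich distance
  have hMGX : ∀ X : Matrix (Fin k) (Fin k) ℝ, M * (G * X) = H * X := fun X => by
    rw [← Matrix.mul_assoc, hMG]
  have hGtMX : ∀ X : Matrix (Fin k) (Fin k) ℝ, Gᵀ * (M * X) = H * X := fun X => by
    rw [← Matrix.mul_assoc, hGtM]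
  have harg2 : Shf * M * Sstar * M * Shf = Bq * Bq := by
    rw [hSstardef, hBqdef]
    simp only [Matrix.mul_assoc]
    rw [hMGX (Shat * (Gᵀ * (M * Shf))), hGtMX Shf, ← hShfm]
    simp only [Matrix.mul_assoc]
  have hmsqarg : msqrt8 (msqrt8 Shat * M * Sstar * M * msqrt8 Shat) = Bq := by
    rw [hmsqS]
    have hXps : (Shf * M * Sstar * M * Shf).PosSemidef := by
      rw [harg2, ← sq]
      exact hBq_ps.pow 2
    rw [msqrt8, dif_pos hXps]
    refine (hBq_ps.eq_sqrt_of_sq_eq hXps ?_).symm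
    rw [sq, ← harg2]
  -- traces
  have htrW : (Shat * W).trace = sh := by
    rw [hWdef, trace_mul_vecMulVec, hshdef]
  have htrBq : Bq.trace = (Shat * M).trace + τ * sh := by
    have h1 : Bq = Shf * (H * Shf) := by rw [hBqdef, Matrix.mul_assoc]
    rw [h1, Matrix.trace_mul_comm]
    have h2 : H * Shf * Shf = H * Shat := by rw [Matrix.mul_assoc, hShfm]
    rw [h2, hHdef, Matrix.add_mul, Matrix.trace_add, Matrix.smul_mul, Matrix.trace_smul,
      Matrix.trace_mul_comm W Shat, htrW, Matrix.trace_mul_comm]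
    simp
  have htrSstar : (Sstar * M).trace = (Shat * M).trace + (2 * τ + τ ^ 2 * c2) * sh := by
    have h1 : Sstar * M = G * Shat * (Gᵀ * M) := by
      rw [hSstardef]; simp only [Matrix.mul_assoc]
    rw [h1, hGtM, Matrix.trace_mul_comm, ← Matrix.mul_assoc, hHG, Matrix.add_mul,
      Matrix.trace_add, Matrix.smul_mul, Matrix.trace_smul, Matrix.trace_mul_comm W Shat,
      htrW, Matrix.trace_mul_comm M Shat]
    simp
  -- the mean term
  have hp : M *ᵥ (M⁻¹ *ᵥ w) = w := by
    rw [Matrix.mulVec_mulVec, hMMinv, Matrix.one_mulVec]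
  have hpw : (M⁻¹ *ᵥ w) ⬝ᵥ w = c2 := by
    rw [dotProduct_comm, hc2def]
  have henorm : enorm8 (Lᵀ *ᵥ (μstar - μhat)) ^ 2 = em ^ 2 := by
    have hμd : μstar - μhat = -((em / c) • (M⁻¹ *ᵥ w)) := by
      rw [hμstardef]; abel
    have hdd : (Lᵀ *ᵥ (M⁻¹ *ᵥ w)) ⬝ᵥ (Lᵀ *ᵥ (M⁻¹ *ᵥ w)) = c2 := by
      rw [dot_shift, Matrix.transpose_transpose, Matrix.mulVec_mulVec, ← hMdef, hp, hc2def,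
        dotProduct_comm]
    rw [enorm8, ← dot_self_eq_sum_sq, Real.sq_sqrt (dot_self_nonneg _), hμd]
    rw [Matrix.mulVec_neg, Matrix.mulVec_smul, neg_dotProduct, dotProduct_neg,
      neg_neg, smul_dotProduct, dotProduct_smul, hdd, smul_eq_mul, smul_eq_mul]
    rw [← hcc]
    field_simp
  -- value of the Gelbrich distance
  have hτsh : τ ^ 2 * c2 * sh = es ^ 2 := by
    have ht2 : t ^ 2 = es ^ 2 * c2 / sh := by
      rw [htdef, div_pow, mul_pow, hcc, Real.sq_sqrt hsh.le]
    have : τ ^ 2 * c2 = t ^ 2 / c2 := by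
      rw [hτdef, div_pow]; field_simp
    rw [this, ht2]
    field_simp
  have hems : em ^ 2 + es ^ 2 = ε ^ 2 := by
    rw [hemdef, hesdef, div_pow, div_pow]
    field_simp
    linear_combination (-1) * hr2
  have hgel : gelbrich8 μstar Sstar μhat Shat L = ε := by
    rw [gelbrich8_def']
    rw [show Lᵀ.mulVec (μstar - μhat) = Lᵀ *ᵥ (μstar - μhat) from rfl]
    rw [← hMdef, hmsqarg, henorm, Matrix.add_mul, Matrix.trace_add, htrSstar, htrBq]
    have hval : em ^ 2 + ((Shat * M).trace + (2 * τ + τ ^ 2 * c2) * sh + (Shat * M).trace)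
        - 2 * ((Shat * M).trace + τ * sh) = ε ^ 2 := by
      linear_combination hτsh + hems
    rw [hval, Real.sqrt_sq hε.le]
  -- value of the objective
  have hμw : μstar ⬝ᵥ w = μhat ⬝ᵥ w - em * c := by
    rw [hμstardef, sub_dotProduct, smul_dotProduct, hpw, smul_eq_mul]
    have : em / c * c2 = em * c := by
      rw [← hcc]; field_simp
    rw [this]
  have hGtw : Gᵀ *ᵥ w = (1 + t) • w := by
    rw [hGt, Matrix.add_mulVec, Matrix.one_mulVec, Matrix.smul_mulVec,
      ← Matrix.mulVec_mulVec, hWdef, vecMulVec_mulVec, ← hc2def]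
    rw [smul_smul, hτc2, add_smul, one_smul]
  have hsw : w ⬝ᵥ Sstar *ᵥ w = (1 + t) ^ 2 * sh := by
    have h1 : Sstar *ᵥ w = G *ᵥ (Shat *ᵥ (Gᵀ *ᵥ w)) := by
      rw [hSstardef, Matrix.mulVec_mulVec, Matrix.mulVec_mulVec]
    rw [h1, dotProduct_comm, dot_shift, hGtw, Matrix.mulVec_smul,
      smul_dotProduct, dotProduct_smul, smul_eq_mul, smul_eq_mul,
      dotProduct_comm, ← hshdef]
    ring
  have hsqsw : Real.sqrt (w ⬝ᵥ Sstar *ᵥ w) = (1 + t) * Real.sqrt sh := by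
    rw [hsw, Real.sqrt_mul (sq_nonneg _), Real.sqrt_sq (by linarith : (0:ℝ) ≤ 1 + t)]
  have htsh : t * Real.sqrt sh = es * c := by
    rw [htdef]; field_simp
  have hemes : em + α * es = ε * r := by
    rw [hemdef, hesdef]
    field_simp
    linear_combination (-1) * hr2
  refine ⟨(μstar, Sstar), hSstar_ps, le_of_eq hgel, ?_⟩
  show -(μstar ⬝ᵥ w) + α * Real.sqrt (w ⬝ᵥ Sstar *ᵥ w) = _
  rw [hμw, hsqsw]
  linear_combination α * htsh + c * hemes




end G8

/-- closed form of the worst-case mean-plus-standard-deviation risk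
over the Gaussian-restricted parametrized Wasserstein (Gelbrich) ball:
`min_{w ∈ Δ} max_{(μ,Σ): g((μ,Σ),(μ̂,Σ̂);L) ≤ ε} (−μᵀw + α √(wᵀΣw))
  = min_{w ∈ Δ} (−μ̂ᵀw + α √(wᵀΣ̂w) + ε √(1+α²) √(wᵀ(LLᵀ)⁻¹w))`. -/
theorem gaussian_dro_closed_form (k : ℕ) (μhat : Fin k → ℝ)
    (Shat L : Matrix (Fin k) (Fin k) ℝ) (α ε : ℝ)
    (hShat : Shat.PosDef) (hα : 0 < α) (hε : 0 < ε)
    (hLtri : ∀ i j : Fin k, i < j → L i j = 0) (hLdiag : ∀ i : Fin k, 0 < L i i) :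
    (⨅ w : {w : Fin k → ℝ // (∀ i, 0 ≤ w i) ∧ ∑ i, w i = 1},
      ⨆ q : {q : (Fin k → ℝ) × Matrix (Fin k) (Fin k) ℝ //
          q.2.PosSemidef ∧ gelbrich8 q.1 q.2 μhat Shat L ≤ ε},
        (-(∑ i, q.1.1 i * w.1 i) +
          α * Real.sqrt (∑ i, w.1 i * (q.1.2.mulVec w.1) i))) =
    (⨅ w : {w : Fin k → ℝ // (∀ i, 0 ≤ w i) ∧ ∑ i, w i = 1},
      (-(∑ i, μhat i * w.1 i) + α * Real.sqrt (∑ i, w.1 i * (Shat.mulVec w.1) i) +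
        ε * Real.sqrt (1 + α ^ 2) *
          Real.sqrt (∑ i, w.1 i * ((L * Lᵀ)⁻¹.mulVec w.1) i))) := by
  apply iInf_congr
  intro w
  have hw0 : w.1 ≠ 0 := by
    intro h
    have h2 := w.2.2
    rw [h] at h2
    simp at h2
  obtain ⟨q0, hq0ps, hq0g, hq0eq⟩ :=
    G8.attain μhat Shat L α ε hShat hα hε hLtri hLdiag w.1 hw0
  haveI hne : Nonempty {q : (Fin k → ℝ) × Matrix (Fin k) (Fin k) ℝ //
      q.2.PosSemidef ∧ gelbrich8 q.1 q.2 μhat Shat L ≤ ε} := ⟨⟨q0, hq0ps, hq0g⟩⟩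
  have hub : ∀ q : {q : (Fin k → ℝ) × Matrix (Fin k) (Fin k) ℝ //
      q.2.PosSemidef ∧ gelbrich8 q.1 q.2 μhat Shat L ≤ ε},
      (-(∑ i, q.1.1 i * w.1 i) + α * Real.sqrt (∑ i, w.1 i * (q.1.2.mulVec w.1) i))
        ≤ (-(∑ i, μhat i * w.1 i) + α * Real.sqrt (∑ i, w.1 i * (Shat.mulVec w.1) i) +
            ε * Real.sqrt (1 + α ^ 2) *
              Real.sqrt (∑ i, w.1 i * ((L * Lᵀ)⁻¹.mulVec w.1) i)) := by
    intro q
    exact G8.upper μhat Shat L α ε hShat hα hε hLtri hLdiag w.1 q.1.1 q.1.2 q.2.1 q.2.2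
  apply le_antisymm
  · exact ciSup_le hub
  · have hb : BddAbove (Set.range fun q : {q : (Fin k → ℝ) × Matrix (Fin k) (Fin k) ℝ //
        q.2.PosSemidef ∧ gelbrich8 q.1 q.2 μhat Shat L ≤ ε} =>
        (-(∑ i, q.1.1 i * w.1 i) +
          α * Real.sqrt (∑ i, w.1 i * (q.1.2.mulVec w.1) i))) := by
      refine ⟨(-(∑ i, μhat i * w.1 i) + α * Real.sqrt (∑ i, w.1 i * (Shat.mulVec w.1) i) +
        ε * Real.sqrt (1 + α ^ 2) *
          Real.sqrt (∑ i, w.1 i * ((L * Lᵀ)⁻¹.mulVec w.1) i)), ?_⟩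
      rintro x ⟨q, rfl⟩
      exact hub q
    refine le_ciSup_of_le hb ⟨q0, hq0ps, hq0g⟩ ?_
    exact le_of_eq hq0eq.symm

end
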